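/- arXiv:2111.06343 — 2 statements merged into one kernel-verified Lean document; each statement's English description precedes it below -/
import Mathlib

section
/- Let σ be a self-adjoint operator on a finite-dimensional Hilbert space with spectral projections Q_1, …, Q_v (onto its distinct eigenspaces), and let E_σ(X) = Σ_i Q_i X Q_i be the associated pinching map. Then for every positive semidefinite operator X, X ≤ v · E_σ(X), where v is the number of distinct eigenvalues of σ. -/
open Matrix
open scoped ComplexOrder

/-- A nonnegative real scalar multiple of a PSD matrix is PSD. -/
lemma psd_smul_aux {d : Type*} [Fintype d] {S : Matrix d d ℂ} (hS : S.PosSemidef)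
    {c : ℝ} (hc : 0 ≤ c) : ((c : ℂ) • S).PosSemidef := by
  constructor
  · have := hS.isHermitian
    unfold Matrix.IsHermitian at *
    rw [conjTranspose_smul, this]
    congr 1
    simp [Complex.ext_iff]
  · intro x
    have h := hS.2 x
    have e : (x.sum fun i xi => x.sum fun j xj => star xi * ((c : ℂ) • S) i j * xj)
        = (c : ℂ) * (x.sum fun i xi => x.sum fun j xj => star xi * S i j * xj) := by
      rw [Finsupp.mul_sum]; congr 1; funext i xi
      rw [Finsupp.mul_sum]; congr 1; funext j xj
      simp only [Matrix.smul_apply, smul_eq_mul]; ring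
    rw [e]
    exact mul_nonneg (by exact_mod_cast hc) h

lemma psd_sum_aux {d : Type*} [Fintype d] {ι : Type*} [DecidableEq ι] (s : Finset ι)
    (f : ι → Matrix d d ℂ) (h : ∀ i ∈ s, (f i).PosSemidef) : (∑ i ∈ s, f i).PosSemidef := by
  induction s using Finset.induction with
  | empty => simpa using (Matrix.PosSemidef.zero (n := d) (R := ℂ))
  | insert _ _ hni ih =>
    rw [Finset.sum_insert hni]
    exact (h _ (Finset.mem_insert_self _ _)).add
      (ih fun i hi => h i (Finset.mem_insert_of_mem hi))

/-- Pinching inequality: if `σ` is self-adjoint with spectral projections `Q 1, …, Q v`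
onto its `v` distinct eigenspaces, then `X ≤ v • E_σ(X)` for every positive semidefinite
`X`, where `E_σ(X) = ∑ i, Q i * X * Q i`. -/
theorem pinching_inequality {d : Type*} [Fintype d] [DecidableEq d] {v : ℕ}
    (σ : Matrix d d ℂ) (Q : Fin v → Matrix d d ℂ) (μ : Fin v → ℝ)
    (hμ : Function.Injective μ)
    (hQH : ∀ i, (Q i).IsHermitian)
    (hQO : ∀ i j, Q i * Q j = if i = j then Q i else 0)
    (hQ1 : ∑ i, Q i = 1)
    (hσ : σ = ∑ i, (μ i : ℂ) • Q i)
    (X : Matrix d d ℂ) (hX : X.PosSemidef) :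
    ((v : ℂ) • (∑ i, Q i * X * Q i) - X).PosSemidef := by
  set E : Matrix d d ℂ := ∑ i, Q i * X * Q i with hE
  set S : Matrix d d ℂ := ∑ i, ∑ j, (Q i - Q j) * X * (Q i - Q j) with hSdef
  have hSpsd : S.PosSemidef := by
    apply psd_sum_aux
    intro i _
    apply psd_sum_aux
    intro j _
    have hH : (Q i - Q j)ᴴ = Q i - Q j := by
      rw [conjTranspose_sub, (hQH i).eq, (hQH j).eq]
    have := hX.conjTranspose_mul_mul_same (Q i - Q j)
    rwa [hH] at this
  have hXsum : ∑ i, ∑ j, Q i * X * Q j = X := by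
    have : ∑ i, ∑ j, Q i * X * Q j = (∑ i, Q i) * X * (∑ j, Q j) := by
      simp only [Finset.sum_mul, Finset.mul_sum]
      exact Finset.sum_comm
    rw [this, hQ1, one_mul, mul_one]
  have hS : S = (2 * v : ℂ) • E - (2 : ℂ) • X := by
    have expand : ∀ i j : Fin v, (Q i - Q j) * X * (Q i - Q j)
        = Q i * X * Q i + Q j * X * Q j - Q i * X * Q j - Q j * X * Q i := by
      intro i j; noncomm_ring
    calc S = ∑ i, ∑ j, (Q i * X * Q i + Q j * X * Q j - Q i * X * Q j - Q j * X * Q i) := by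
          rw [hSdef]; exact Finset.sum_congr rfl fun i _ => Finset.sum_congr rfl fun j _ => expand i j
    _ = (∑ i, ∑ j : Fin v, Q i * X * Q i) + (∑ i : Fin v, ∑ j, Q j * X * Q j)
        - (∑ i, ∑ j, Q i * X * Q j) - (∑ i, ∑ j, Q j * X * Q i) := by
          simp [Finset.sum_sub_distrib, Finset.sum_add_distrib]
    _ = (2 * v : ℂ) • E - (2 : ℂ) • X := by
          rw [Finset.sum_comm (f := fun i j => Q j * X * Q i), hXsum]
          simp only [Finset.sum_const, Finset.card_univ, Fintype.card_fin,
            ← Finset.smul_sum, Finset.sum_comm (f := fun i j => Q j * X * Q j)]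
          rw [← hE, (Nat.cast_smul_eq_nsmul ℂ _ _).symm]
          module
  have hgoal : (v : ℂ) • E - X = ((1/2 : ℝ) : ℂ) • S := by
    rw [hS]
    push_cast
    module
  rw [hgoal]
  exact psd_smul_aux hSpsd (by norm_num)
end

section
/- Let ρ, σ̃, ρ̃ be states (σ̃, ρ̃ possibly subnormalized) on a finite-dimensional Hilbert space, let Π be a projection, and set p = tr(ρΠ), q = tr(ρ̃Π). If q ≤ p/9 and tr ρ̃ ≤ 1, then the purified distance satisfies P(ρ, ρ̃) ≥ sqrt(2p)/3. -/
open Matrix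
open scoped Kronecker ComplexOrder

noncomputable section

variable {d : Type*} [Fintype d] [DecidableEq d]

/-- Apply a real function to a Hermitian matrix via its spectral decomposition (0 otherwise). -/
noncomputable def matFun (A : Matrix d d ℂ) (f : ℝ → ℝ) : Matrix d d ℂ :=
  if h : A.IsHermitian then
    (h.eigenvectorUnitary : Matrix d d ℂ) *
      Matrix.diagonal (fun i => (f (h.eigenvalues i) : ℂ)) *
      (h.eigenvectorUnitary : Matrix d d ℂ)ᴴ
  else 0

/-- Real power of a Hermitian matrix (on its support, with the `Real.rpow` conventions). -/
noncomputable def mpow (A : Matrix d d ℂ) (p : ℝ) : Matrix d d ℂ :=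
  matFun A (fun x => Real.rpow x p)

/-- Base-2 matrix logarithm on the support. -/
noncomputable def matLog (A : Matrix d d ℂ) : Matrix d d ℂ :=
  matFun A (Real.logb 2)

/-- Spectral projection onto the nonnegative eigenspace. -/
noncomputable def projNonneg (A : Matrix d d ℂ) : Matrix d d ℂ :=
  matFun A (fun x => if 0 ≤ x then 1 else 0)

/-- A density matrix. -/
def IsState (A : Matrix d d ℂ) : Prop := A.PosSemidef ∧ A.trace = 1

/-- Umegaki relative entropy, base-2 logarithm. -/
noncomputable def relEnt (ρ σ : Matrix d d ℂ) : ℝ :=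
  (ρ * (matLog ρ - matLog σ)).trace.re

/-- Sandwiched Rényi divergence of order `α`. -/
noncomputable def sandRenyi (α : ℝ) (ρ σ : Matrix d d ℂ) : ℝ :=
  (α - 1)⁻¹ *
    Real.logb 2
      ((mpow (mpow σ ((1 - α) / (2 * α)) * ρ * mpow σ ((1 - α) / (2 * α))) α).trace.re)

/-- Number of distinct eigenvalues of a (Hermitian) matrix. -/
noncomputable def nDistinctEig (A : Matrix d d ℂ) : ℕ :=
  if h : A.IsHermitian then (Finset.univ.image h.eigenvalues).card else 0

/-- Generalized (Uhlmann) fidelity of subnormalized states. -/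
noncomputable def genFid (ρ σ : Matrix d d ℂ) : ℝ :=
  (mpow (mpow σ (1/2) * ρ * mpow σ (1/2)) (1/2)).trace.re +
    Real.sqrt ((1 - ρ.trace.re) * (1 - σ.trace.re))

/-- Purified distance. -/
noncomputable def pdist (ρ σ : Matrix d d ℂ) : ℝ :=
  Real.sqrt (1 - (genFid ρ σ) ^ 2)

/-- Partial trace over the second tensor factor. -/
noncomputable def ptrace2 {α β : Type*} [Fintype β] (M : Matrix (α × β) (α × β) ℂ) :
    Matrix α α ℂ :=
  Matrix.of fun a a' => ∑ b : β, M (a, b) (a', b)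


/-- Partial trace over the first tensor factor. -/
noncomputable def ptrace1 {α β : Type*} [Fintype α] (M : Matrix (α × β) (α × β) ℂ) :
    Matrix β β ℂ :=
  Matrix.of fun b b' => ∑ a : α, M (a, b) (a, b')

/-- Max-relative entropy. -/
noncomputable def Dmax (ρ σ : Matrix d d ℂ) : ℝ :=
  sInf {lam : ℝ | (((2:ℝ) ^ lam) • σ - ρ).PosSemidef}

/-- Minimal eigenvalue of a Hermitian matrix. -/
noncomputable def lamMin (A : Matrix d d ℂ) : ℝ :=
  if h : A.IsHermitian then ⨅ i, h.eigenvalues i else 0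


set_option linter.unusedSectionVars false
set_option maxHeartbeats 1000000

lemma matFun_trace (A : Matrix d d ℂ) (hA : A.IsHermitian) (f : ℝ → ℝ) :
    (matFun A f).trace = ∑ i, (f (hA.eigenvalues i) : ℂ) := by
  rw [matFun, dif_pos hA, trace_mul_cycle, ← Matrix.star_eq_conjTranspose,
    Unitary.coe_star_mul_self, one_mul, trace_diagonal]


lemma trace_re_nonneg_psd {G : Matrix d d ℂ} (hG : G.PosSemidef) : 0 ≤ G.trace.re := by
  rw [Matrix.trace, Complex.re_sum]
  refine Finset.sum_nonneg fun i _ => ?_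
  have := hG.re_dotProduct_nonneg (Pi.single i 1)
  simpa [Matrix.mulVec_single, dotProduct, Pi.single_apply, Matrix.diag] using this


lemma cs_col (x y : d → ℂ) :
    (∑ k, (starRingEnd ℂ) (x k) * y k).re ≤
      Real.sqrt (∑ k, ‖x k‖^2) * Real.sqrt (∑ k, ‖y k‖^2) := by
  rw [Complex.re_sum]
  calc ∑ k, ((starRingEnd ℂ) (x k) * y k).re ≤ ∑ k, ‖x k‖ * ‖y k‖ := by
        refine Finset.sum_le_sum fun k _ => ?_
        refine le_trans (Complex.re_le_norm _) ?_
        simp [Complex.norm_conj]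
    _ ≤ _ := by simpa using Real.sum_mul_le_sqrt_mul_sqrt Finset.univ (fun k => ‖x k‖) (fun k => ‖y k‖)


lemma trace_ctm_re (P : Matrix d d ℂ) : (Pᴴ * P).trace.re = ∑ i, ∑ k, ‖P k i‖^2 := by
  rw [Matrix.trace, Complex.re_sum]
  refine Finset.sum_congr rfl fun i _ => ?_
  rw [Matrix.diag, Matrix.mul_apply, Complex.re_sum]
  refine Finset.sum_congr rfl fun k _ => ?_
  rw [Matrix.conjTranspose_apply]
  rw [RCLike.star_def, ← Complex.normSq_eq_conj_mul_self]
  rw [Complex.normSq_eq_norm_sq]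
  simp [← Complex.ofReal_pow]


lemma cs_mat (P Q : Matrix d d ℂ) :
    ∑ i, ((Pᴴ * Q) i i).re ≤
      Real.sqrt ((Pᴴ*P).trace.re) * Real.sqrt ((Qᴴ*Q).trace.re) := by
  have h1 : ∀ i, ((Pᴴ * Q) i i).re ≤
      Real.sqrt (∑ k, ‖P k i‖^2) * Real.sqrt (∑ k, ‖Q k i‖^2) := by
    intro i
    rw [Matrix.mul_apply]
    simp only [Matrix.conjTranspose_apply]
    exact cs_col (fun k => P k i) (fun k => Q k i)
  calc ∑ i, ((Pᴴ * Q) i i).re ≤ ∑ i, Real.sqrt (∑ k, ‖P k i‖^2) * Real.sqrt (∑ k, ‖Q k i‖^2) :=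
        Finset.sum_le_sum fun i _ => h1 i
    _ ≤ Real.sqrt (∑ i, ∑ k, ‖P k i‖^2) * Real.sqrt (∑ i, ∑ k, ‖Q k i‖^2) := by
        refine Real.sum_sqrt_mul_sqrt_le Finset.univ (fun i => ?_) (fun i => ?_) <;>
          positivity
    _ = _ := by rw [trace_ctm_re, trace_ctm_re]


lemma matFun_isHermitian {A : Matrix d d ℂ} (hA : A.IsHermitian) (f : ℝ → ℝ) :
    (matFun A f).IsHermitian := by
  rw [matFun, dif_pos hA, Matrix.IsHermitian, conjTranspose_mul, conjTranspose_mul,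
    conjTranspose_conjTranspose, diagonal_conjTranspose, ← mul_assoc]
  have : (star fun i => (f (hA.eigenvalues i) : ℂ)) = fun i => (f (hA.eigenvalues i) : ℂ) :=
    funext fun i => by rw [Pi.star_apply, Complex.star_def, Complex.conj_ofReal]
  rw [this]


lemma mpow_half_mul_self {A : Matrix d d ℂ} (hA : A.PosSemidef) :
    mpow A (1/2) * mpow A (1/2) = A := by
  have hAh : A.IsHermitian := hA.1
  rw [mpow, matFun, dif_pos hAh]
  set U : Matrix d d ℂ := (hAh.eigenvectorUnitary : Matrix d d ℂ) with hUdef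
  have hU1 : Uᴴ * U = 1 := by
    rw [← Matrix.star_eq_conjTranspose]; exact Unitary.coe_star_mul_self _
  set F : Matrix d d ℂ := Matrix.diagonal (fun i => (Real.rpow (hAh.eigenvalues i) (1/2) : ℂ))
    with hFdef
  have hFF : F * F = Matrix.diagonal (fun i => ((hAh.eigenvalues i : ℝ) : ℂ)) := by
    rw [hFdef, diagonal_mul_diagonal]
    exact congrArg Matrix.diagonal (funext fun i => by
      rw [← Complex.ofReal_mul,
        show Real.rpow (hAh.eigenvalues i) (1/2) = Real.sqrt (hAh.eigenvalues i) from
          (Real.sqrt_eq_rpow _).symm,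
        Real.mul_self_sqrt (hA.eigenvalues_nonneg i)])
  calc U * F * Uᴴ * (U * F * Uᴴ) = U * F * (Uᴴ * U) * F * Uᴴ := by simp only [mul_assoc]
    _ = U * (F * F) * Uᴴ := by rw [hU1]; simp only [mul_one, mul_assoc]
    _ = A := by
        rw [hFF]
        have := hAh.spectral_theorem
        rw [Unitary.conjStarAlgAut_apply] at this
        rw [← Matrix.star_eq_conjTranspose]
        exact this.symm


lemma fid_trace_bound (M A X₁ Y₁ X₂ Y₂ : Matrix d d ℂ) (hMh : M.IsHermitian)
    (hMA : M = Aᴴ * A) (hsplit : A = X₁ᴴ * Y₁ + X₂ᴴ * Y₂) :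
    ∑ i, Real.sqrt (hMh.eigenvalues i) ≤
      Real.sqrt ((X₁ᴴ*X₁).trace.re) * Real.sqrt ((Y₁ᴴ*Y₁).trace.re) +
      Real.sqrt ((X₂ᴴ*X₂).trace.re) * Real.sqrt ((Y₂ᴴ*Y₂).trace.re) := by
  have hMpsd : M.PosSemidef := hMA ▸ posSemidef_conjTranspose_mul_self A
  set D : d → ℝ := hMh.eigenvalues with hDdef
  have hD : ∀ i, 0 ≤ D i := hMpsd.eigenvalues_nonneg
  set U : Matrix d d ℂ := (hMh.eigenvectorUnitary : Matrix d d ℂ) with hUdef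
  have hU1 : Uᴴ * U = 1 := by
    rw [← Matrix.star_eq_conjTranspose]; exact Unitary.coe_star_mul_self _
  have hU2 : U * Uᴴ = 1 := by
    rw [← Matrix.star_eq_conjTranspose]
    exact (Matrix.mem_unitaryGroup_iff).mp hMh.eigenvectorUnitary.2
  have hdiag : Uᴴ * M * U = diagonal (fun i => (D i : ℂ)) := by
    rw [← Matrix.star_eq_conjTranspose]
    have := hMh.conjStarAlgAut_star_eigenvectorUnitary
    simp only [Unitary.conjStarAlgAut_apply, Unitary.coe_star, star_star] at this
    exact this
  set W : Matrix d d ℂ := A * U with hWdef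
  have hWW : Wᴴ * W = diagonal (fun i => (D i : ℂ)) := by
    rw [hWdef, conjTranspose_mul, ← hdiag, hMA]
    simp [mul_assoc]
  set a : d → ℂ := fun i => if D i = 0 then 0 else ((Real.sqrt (D i) : ℝ) : ℂ)⁻¹ with hadef
  have hstara : ∀ i, star (a i) = a i := by
    intro i
    by_cases h : D i = 0 <;> simp [hadef, h, ← Complex.ofReal_inv]
  set V : Matrix d d ℂ := W * diagonal a with hVdef
  set E : d → ℂ := fun i => if D i = 0 then 0 else 1 with hEdef
  have hsq : ∀ i, (D i : ℂ) = ((Real.sqrt (D i) : ℝ) : ℂ) * ((Real.sqrt (D i) : ℝ) : ℂ) := by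
    intro i; rw [← Complex.ofReal_mul, Real.mul_self_sqrt (hD i)]
  have hsne : ∀ i, D i ≠ 0 → ((Real.sqrt (D i) : ℝ) : ℂ) ≠ 0 := by
    intro i h
    exact_mod_cast Real.sqrt_ne_zero'.2 (lt_of_le_of_ne (hD i) (Ne.symm h))
  have hVV : Vᴴ * V = diagonal E := by
    rw [hVdef, conjTranspose_mul, diagonal_conjTranspose,
      show star a = a from funext hstara, mul_assoc, ← mul_assoc Wᴴ, hWW,
      diagonal_mul_diagonal, diagonal_mul_diagonal]
    ext i j
    by_cases hij : i = j
    · subst hij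
      rw [Matrix.diagonal_apply_eq, Matrix.diagonal_apply_eq]
      by_cases h : D i = 0
      · simp [hadef, hEdef, h]
      · simp only [hadef, hEdef, h, if_false]
        rw [hsq i]
        have := hsne i h
        field_simp
    · rw [Matrix.diagonal_apply_ne _ hij, Matrix.diagonal_apply_ne _ hij]
  have hVE : V * diagonal E = V := by
    rw [hVdef, mul_assoc, diagonal_mul_diagonal]
    ext i j
    rw [Matrix.mul_apply, Matrix.mul_apply]
    refine Finset.sum_congr rfl fun k _ => ?_
    by_cases hkj : k = j
    · subst hkj
      by_cases h : D k = 0 <;>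
        simp [Matrix.diagonal_apply, hadef, hEdef, h]
    · simp [Matrix.diagonal_apply, hkj]
  have hVAU : Vᴴ * (A * U) = diagonal (fun i => (Real.sqrt (D i) : ℂ)) := by
    rw [hVdef, conjTranspose_mul, diagonal_conjTranspose,
      show star a = a from funext hstara, ← hWdef, mul_assoc, hWW, diagonal_mul_diagonal]
    ext i j
    by_cases hij : i = j
    · subst hij
      rw [Matrix.diagonal_apply_eq, Matrix.diagonal_apply_eq]
      by_cases h : D i = 0
      · simp [hadef, h, Real.sqrt_eq_zero', le_of_eq h.symm]
      · simp only [hadef, h, if_false]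
        rw [hsq i]
        field_simp
    · rw [Matrix.diagonal_apply_ne _ hij, Matrix.diagonal_apply_ne _ hij]
  -- projection N = V Vᴴ
  have hVVH : (V * Vᴴ)ᴴ = V * Vᴴ := by simp [conjTranspose_mul]
  have hNN : (V * Vᴴ) * (V * Vᴴ) = V * Vᴴ := by
    calc (V*Vᴴ)*(V*Vᴴ) = V * (Vᴴ*V) * Vᴴ := by simp only [mul_assoc]
      _ = (V * diagonal E) * Vᴴ := by rw [hVV, mul_assoc]
      _ = V * Vᴴ := by rw [hVE]
  have tV : ∀ X : Matrix d d ℂ, ((X*V)ᴴ * (X*V)).trace.re ≤ (Xᴴ*X).trace.re := by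
    intro X
    set K : Matrix d d ℂ := 1 - V * Vᴴ with hKdef
    have hKH : Kᴴ = K := by simp [hKdef, conjTranspose_sub, hVVH]
    have hKK : K * K = K := by
      simp only [hKdef, sub_mul, mul_sub, one_mul, mul_one, hNN]
      abel
    have h1 : ((X*V)ᴴ * (X*V)).trace = ((V*Vᴴ) * (Xᴴ*X)).trace := by
      rw [conjTranspose_mul,
        show Vᴴ * Xᴴ * (X * V) = Vᴴ * (Xᴴ * X) * V by simp only [mul_assoc],
        trace_mul_cycle]
    have h2 : ((X*K)ᴴ * (X*K)).trace = (Xᴴ*X).trace - ((V*Vᴴ) * (Xᴴ*X)).trace := by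
      rw [conjTranspose_mul,
        show Kᴴ * Xᴴ * (X * K) = Kᴴ * (Xᴴ * X) * K by simp only [mul_assoc],
        trace_mul_cycle, ← mul_assoc, hKH, hKK, hKdef]
      simp [sub_mul, trace_sub, mul_assoc]
    have h3 : 0 ≤ ((X*K)ᴴ * (X*K)).trace.re :=
      trace_re_nonneg_psd (posSemidef_conjTranspose_mul_self _)
    rw [h2, Complex.sub_re] at h3
    rw [h1]
    linarith
  have tU : ∀ Y : Matrix d d ℂ, ((Y*U)ᴴ * (Y*U)).trace = (Yᴴ*Y).trace := by
    intro Y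
    rw [conjTranspose_mul,
      show Uᴴ * Yᴴ * (Y * U) = Uᴴ * (Yᴴ * Y) * U by simp only [mul_assoc],
      trace_mul_cycle, ← mul_assoc, hU2, one_mul]
  have key : ∑ i, Real.sqrt (D i) = ∑ i, ((Vᴴ * (A*U)) i i).re := by
    rw [hVAU]
    simp
  have hsplit2 : Vᴴ * (A * U) = (X₁*V)ᴴ * (Y₁*U) + (X₂*V)ᴴ * (Y₂*U) := by
    rw [hsplit]
    simp only [conjTranspose_mul]
    noncomm_ring
  have main : ∑ i, Real.sqrt (D i) =
      (∑ i, (((X₁*V)ᴴ * (Y₁*U)) i i).re) + ∑ i, (((X₂*V)ᴴ * (Y₂*U)) i i).re := by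
    rw [key, hsplit2, ← Finset.sum_add_distrib]
    refine Finset.sum_congr rfl fun i _ => ?_
    rw [Matrix.add_apply, Complex.add_re]
  rw [main]
  have b1 := cs_mat (X₁*V) (Y₁*U)
  have b2 := cs_mat (X₂*V) (Y₂*U)
  have f1 : Real.sqrt (((X₁*V)ᴴ*(X₁*V)).trace.re) ≤ Real.sqrt ((X₁ᴴ*X₁).trace.re) :=
    Real.sqrt_le_sqrt (tV X₁)
  have f2 : Real.sqrt (((X₂*V)ᴴ*(X₂*V)).trace.re) ≤ Real.sqrt ((X₂ᴴ*X₂).trace.re) :=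
    Real.sqrt_le_sqrt (tV X₂)
  rw [tU Y₁] at b1
  rw [tU Y₂] at b2
  have g1 : (∑ i, (((X₁*V)ᴴ * (Y₁*U)) i i).re) ≤
      Real.sqrt ((X₁ᴴ*X₁).trace.re) * Real.sqrt ((Y₁ᴴ*Y₁).trace.re) :=
    b1.trans (mul_le_mul_of_nonneg_right f1 (Real.sqrt_nonneg _))
  have g2 : (∑ i, (((X₂*V)ᴴ * (Y₂*U)) i i).re) ≤
      Real.sqrt ((X₂ᴴ*X₂).trace.re) * Real.sqrt ((Y₂ᴴ*Y₂).trace.re) :=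
    b2.trans (mul_le_mul_of_nonneg_right f2 (Real.sqrt_nonneg _))
  linarith


/-- If `Π` is a projection, `p = tr(ρΠ)`, `q = tr(ρ̃Π)` with `q ≤ p/9` and `tr ρ̃ ≤ 1`,
then the purified distance satisfies `P(ρ, ρ̃) ≥ √(2p)/3`. -/
theorem purified_distance_lower_bound {d : Type*} [Fintype d] [DecidableEq d]
    (ρ ρt σt : Matrix d d ℂ) (hρ : IsState ρ)
    (hρt : ρt.PosSemidef) (hρt1 : ρt.trace.re ≤ 1)
    (hσt : σt.PosSemidef) (hσt1 : σt.trace.re ≤ 1)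
    (Pi : Matrix d d ℂ) (hPiH : Pi.IsHermitian) (hPi : Pi * Pi = Pi)
    (p q : ℝ) (hp : p = (ρ * Pi).trace.re) (hq : q = (ρt * Pi).trace.re)
    (hqp : q ≤ p / 9) :
    Real.sqrt (2 * p) / 3 ≤ pdist ρ ρt := by
  obtain ⟨hρpsd, hρtr⟩ := hρ
  set R : Matrix d d ℂ := mpow ρ (1/2) with hRdef
  set S : Matrix d d ℂ := mpow ρt (1/2) with hSdef
  have hRH : Rᴴ = R := matFun_isHermitian hρpsd.1 _
  have hSH : Sᴴ = S := matFun_isHermitian hρt.1 _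
  have hRR : R * R = ρ := mpow_half_mul_self hρpsd
  have hSS : S * S = ρt := mpow_half_mul_self hρt
  set A : Matrix d d ℂ := R * S with hAdef
  have hMA : S * ρ * S = Aᴴ * A := by
    rw [hAdef, conjTranspose_mul, hRH, hSH, ← hRR]
    simp only [mul_assoc]
  have hMh : (S * ρ * S).IsHermitian := by
    rw [hMA]; exact isHermitian_conjTranspose_mul_self A
  -- projections
  set Pi' : Matrix d d ℂ := 1 - Pi with hPi'def
  have hPi'H : Pi'ᴴ = Pi' := by
    rw [hPi'def, conjTranspose_sub, conjTranspose_one, hPiH.eq]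
  have hPi' : Pi' * Pi' = Pi' := by
    simp only [hPi'def, sub_mul, mul_sub, one_mul, mul_one, hPi]
    abel
  -- split A
  have hsplit : A = (Pi * R)ᴴ * (Pi * S) + (Pi' * R)ᴴ * (Pi' * S) := by
    rw [conjTranspose_mul, conjTranspose_mul, hRH, hPiH.eq, hPi'H,
      show R * Pi * (Pi * S) = R * ((Pi * Pi) * S) by simp only [mul_assoc],
      show R * Pi' * (Pi' * S) = R * ((Pi' * Pi') * S) by simp only [mul_assoc],
      hPi, hPi', ← mul_add, ← add_mul, hPi'def]
    simp [hAdef]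
  -- traces
  have T1 : ((Pi * R)ᴴ * (Pi * R)).trace = (ρ * Pi).trace := by
    rw [conjTranspose_mul, hRH, hPiH.eq,
      show R * Pi * (Pi * R) = R * ((Pi * Pi) * R) by simp only [mul_assoc], hPi,
      trace_mul_comm R (Pi * R), mul_assoc, hRR, trace_mul_comm Pi ρ]
  have T2 : ((Pi' * R)ᴴ * (Pi' * R)).trace = (ρ * Pi').trace := by
    rw [conjTranspose_mul, hRH, hPi'H,
      show R * Pi' * (Pi' * R) = R * ((Pi' * Pi') * R) by simp only [mul_assoc], hPi',
      trace_mul_comm R (Pi' * R), mul_assoc, hRR, trace_mul_comm Pi' ρ]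
  have T3 : ((Pi * S)ᴴ * (Pi * S)).trace = (ρt * Pi).trace := by
    rw [conjTranspose_mul, hSH, hPiH.eq,
      show S * Pi * (Pi * S) = S * ((Pi * Pi) * S) by simp only [mul_assoc], hPi,
      trace_mul_comm S (Pi * S), mul_assoc, hSS, trace_mul_comm Pi ρt]
  have T4 : ((Pi' * S)ᴴ * (Pi' * S)).trace = (ρt * Pi').trace := by
    rw [conjTranspose_mul, hSH, hPi'H,
      show S * Pi' * (Pi' * S) = S * ((Pi' * Pi') * S) by simp only [mul_assoc], hPi',
      trace_mul_comm S (Pi' * S), mul_assoc, hSS, trace_mul_comm Pi' ρt]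
  -- nonnegativity and values
  have hp0 : 0 ≤ p := by
    rw [hp, ← T1]; exact trace_re_nonneg_psd (posSemidef_conjTranspose_mul_self _)
  have hq0 : 0 ≤ q := by
    rw [hq, ← T3]; exact trace_re_nonneg_psd (posSemidef_conjTranspose_mul_self _)
  have hT2val : (ρ * Pi').trace.re = 1 - p := by
    rw [hPi'def, mul_sub, mul_one, trace_sub, Complex.sub_re, hρtr, hp, Complex.one_re]
  have hT4val : (ρt * Pi').trace.re = ρt.trace.re - q := by
    rw [hPi'def, mul_sub, mul_one, trace_sub, Complex.sub_re, hq]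
  have h1p0 : 0 ≤ 1 - p := by
    rw [← hT2val, ← T2]; exact trace_re_nonneg_psd (posSemidef_conjTranspose_mul_self _)
  have hT4pos : 0 ≤ ρt.trace.re - q := by
    rw [← hT4val, ← T4]; exact trace_re_nonneg_psd (posSemidef_conjTranspose_mul_self _)
  -- the fidelity bound
  have hbound := fid_trace_bound (S * ρ * S) A (Pi * R) (Pi * S) (Pi' * R) (Pi' * S)
    hMh hMA hsplit
  rw [show ((Pi * R)ᴴ * (Pi * R)).trace.re = p by rw [T1, ← hp],
    show ((Pi * S)ᴴ * (Pi * S)).trace.re = q by rw [T3, ← hq],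
    show ((Pi' * R)ᴴ * (Pi' * R)).trace.re = 1 - p by rw [T2, hT2val],
    show ((Pi' * S)ᴴ * (Pi' * S)).trace.re = ρt.trace.re - q by rw [T4, hT4val]] at hbound
  -- genFid equals the eigenvalue sum
  have hgen : genFid ρ ρt = ∑ i, Real.sqrt (hMh.eigenvalues i) := by
    rw [genFid, ← hSdef, show (1 : ℝ) - ρ.trace.re = 0 by rw [hρtr, Complex.one_re]; ring,
      zero_mul, Real.sqrt_zero, add_zero, mpow, matFun_trace _ hMh, Complex.re_sum]
    refine Finset.sum_congr rfl fun i _ => ?_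
    rw [Complex.ofReal_re,
      show Real.rpow (hMh.eigenvalues i) (1/2) = Real.sqrt (hMh.eigenvalues i) from
        (Real.sqrt_eq_rpow _).symm]
  have hF0 : 0 ≤ genFid ρ ρt := by
    rw [hgen]; exact Finset.sum_nonneg fun i _ => Real.sqrt_nonneg _
  set F : ℝ := genFid ρ ρt with hFdef
  have hFle : F ≤ Real.sqrt p * Real.sqrt q + Real.sqrt (1-p) * Real.sqrt (ρt.trace.re - q) := by
    rw [hgen]; exact hbound
  -- numeric finish
  have hsq19 : Real.sqrt q ≤ Real.sqrt p / 3 := by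
    have h1 : Real.sqrt q ≤ Real.sqrt (p/9) := Real.sqrt_le_sqrt hqp
    have h2 : Real.sqrt (p/9) = Real.sqrt p / 3 := by
      rw [show p/9 = p * (1/3)^2 by ring, Real.sqrt_mul hp0, Real.sqrt_sq (by norm_num)]
      ring
    linarith
  have hs1 : Real.sqrt (ρt.trace.re - q) ≤ 1 :=
    Real.sqrt_le_one.2 (by linarith)
  have hFle2 : F ≤ p / 3 + Real.sqrt (1-p) := by
    have e1 : Real.sqrt p * Real.sqrt q ≤ Real.sqrt p * (Real.sqrt p / 3) :=
      mul_le_mul_of_nonneg_left hsq19 (Real.sqrt_nonneg _)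
    have e2 : Real.sqrt p * (Real.sqrt p / 3) = p / 3 := by
      rw [show Real.sqrt p * (Real.sqrt p / 3) = Real.sqrt p * Real.sqrt p / 3 by ring,
        Real.mul_self_sqrt hp0]
    have e3 : Real.sqrt (1-p) * Real.sqrt (ρt.trace.re - q) ≤ Real.sqrt (1-p) * 1 :=
      mul_le_mul_of_nonneg_left hs1 (Real.sqrt_nonneg _)
    calc F ≤ _ := hFle
      _ ≤ p / 3 + Real.sqrt (1-p) := by rw [← e2]; linarith
  have hp1 : p ≤ 1 := by linarith
  have hskey : 2 * p / 9 ≤ 1 - F^2 := by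
    have hsnn : 0 ≤ Real.sqrt (1-p) := Real.sqrt_nonneg _
    have hssq : Real.sqrt (1-p) ^ 2 = 1 - p := Real.sq_sqrt h1p0
    have hsle1 : Real.sqrt (1-p) ≤ 1 := Real.sqrt_le_one.2 (by linarith)
    nlinarith [sq_nonneg F, sq_nonneg (p/3 + Real.sqrt (1-p)),
      mul_self_le_mul_self hF0 hFle2]
  have : Real.sqrt (2*p/9) ≤ pdist ρ ρt := by
    rw [pdist, ← hFdef]
    exact Real.sqrt_le_sqrt hskey
  have hconv : Real.sqrt (2*p) / 3 = Real.sqrt (2*p/9) := by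
    rw [show 2*p/9 = (2*p) * ((1/3)^2) by ring,
      Real.sqrt_mul (by linarith : (0:ℝ) ≤ 2*p) ((1/3)^2),
      Real.sqrt_sq (by norm_num : (0:ℝ) ≤ 1/3)]
    ring
  linarith


end
end
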